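/- arXiv:2604.13911 — 5 statements merged into one kernel-verified Lean document; each statement's English description precedes it below -/
import Mathlib

section
/- Let A be a commutative ring with unity, let M be a finitely generated A-module, let N be an A-submodule of M, and let f : N → M be a surjective A-module homomorphism. Then f is an A-module isomorphism (i.e., f is bijective). -/
/-- **Orzech's theorem.** Let `A` be a commutative ring with unity, let `M` be a
finitely generated `A`-module, let `N` be an `A`-submodule of `M`, and let
`f : N → M` be a surjective `A`-module homomorphism. Then `f` is an
`A`-module isomorphism (i.e., bijective). -/
theorem orzech (A : Type*) [CommRing A] (M : Type*) [AddCommGroup M] [Module A M]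
    [Module.Finite A M] (N : Submodule A M) (f : N →ₗ[A] M)
    (hf : Function.Surjective f) : Function.Bijective f := by
  exact ⟨OrzechProperty.injective_of_surjective_of_submodule f hf, hf⟩
end

section
/- Let A be a commutative ring with unity, let M be a finitely generated A-module, and let f : M → M be a surjective A-module endomorphism of M. Then f is an A-module isomorphism (i.e., f is bijective). -/
/-- **Vasconcelos's theorem.** A surjective endomorphism of a finitely generated
module over a commutative ring is an isomorphism (i.e., bijective). -/
theorem vasconcelos (A : Type*) [CommRing A] (M : Type*) [AddCommGroup M] [Module A M]
    [Module.Finite A M] (f : M →ₗ[A] M) (hf : Function.Surjective f) :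
    Function.Bijective f :=
  ⟨OrzechProperty.injective_of_surjective_endomorphism f hf, hf⟩
end

section
/- Let A be a commutative ring with unity, let n ∈ ℕ, let g : A^n → A^n be an A-linear map, and let V be an A-submodule of A^n such that the preimage g⁻¹(V) is contained in V. Then the image g(V) is contained in V. -/
open Polynomial

private lemma divX_iterate_coeff {A : Type*} [CommRing A] (p : Polynomial A)
    (k j : ℕ) : (Polynomial.divX^[k] p).coeff j = p.coeff (j + k) := by
  induction k generalizing j with
  | zero => simp
  | succ k ih =>
    rw [Function.iterate_succ_apply', Polynomial.coeff_divX, ih]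
    ring_nf

private lemma divX_iterate_natDegree_eq_one {A : Type*} [CommRing A]
    {p : Polynomial A} (hp : p.Monic) (hd : p.natDegree ≠ 0) :
    Polynomial.divX^[p.natDegree] p = 1 := by
  have : Polynomial.divX^[p.natDegree] p = Polynomial.C 1 := by
    ext j
    rw [divX_iterate_coeff, Polynomial.coeff_C]
    rcases j with _ | j
    · simpa using hp.coeff_natDegree
    · have : p.natDegree < j + 1 + p.natDegree := by omega
      simp [Polynomial.coeff_eq_zero_of_natDegree_lt this]
  simpa using this

/-- Let `g : A^n → A^n` be an `A`-linear map and `V ⊆ A^n` an `A`-submodule with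
`g⁻¹(V) ⊆ V`. Then `g(V) ⊆ V`. -/
theorem orzech_key_lemma (A : Type*) [CommRing A] (n : ℕ)
    (g : (Fin n → A) →ₗ[A] (Fin n → A)) (V : Submodule A (Fin n → A))
    (h : V.comap g ≤ V) : V.map g ≤ V := by
  rintro x ⟨v, hv, rfl⟩
  set p := g.charpoly with hp
  have hmon : p.Monic := g.charpoly_monic
  have haev : Polynomial.aeval g p = 0 := g.aeval_self_charpoly
  -- Horner step: applying `g` to `aeval g (divX q) v` recovers `aeval g q v - q.coeff 0 • v`
  have horner : ∀ q : Polynomial A,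
      g (Polynomial.aeval g (Polynomial.divX q) v)
        = Polynomial.aeval g q v - q.coeff 0 • v := by
    intro q
    have e : Polynomial.aeval g q v
        = g (Polynomial.aeval g (Polynomial.divX q) v) + q.coeff 0 • v := by
      conv_lhs => rw [← Polynomial.X_mul_divX_add q]
      simp only [map_add, map_mul, Polynomial.aeval_X, Polynomial.aeval_C,
        LinearMap.add_apply, Module.End.mul_apply, Module.algebraMap_end_apply]
    rw [e, add_sub_cancel_right]
  -- key induction: all Horner truncations of `p`, applied to `v`, stay in `V`
  have key : ∀ k : ℕ, Polynomial.aeval g (Polynomial.divX^[k] p) v ∈ V := by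
    intro k
    induction k with
    | zero => simpa [haev] using V.zero_mem
    | succ k ih =>
      apply h
      show g _ ∈ V
      rw [Function.iterate_succ_apply', horner]
      exact V.sub_mem ih (V.smul_mem _ hv)
  by_cases hd : p.natDegree = 0
  · -- trivial case: `p = 1`, so every vector is `0`
    have hp1 : p = 1 := (hmon.natDegree_eq_zero).mp hd
    have : v = 0 := by
      have := congrArg (fun f => f v) haev
      simpa [hp1] using this
    simp [this]
  · have hfin := key (p.natDegree - 1)
    have := horner (Polynomial.divX^[p.natDegree - 1] p)
    rw [← Function.iterate_succ_apply' Polynomial.divX] at this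
    have hns : p.natDegree - 1 + 1 = p.natDegree := by omega
    rw [Nat.succ_eq_add_one, hns, divX_iterate_natDegree_eq_one hmon hd] at this
    simp only [map_one, Module.End.one_apply] at this
    have hgv : g v ∈ V := by
      rw [this]
      exact V.sub_mem hfin (V.smul_mem _ hv)
    exact hgv
end

section
/- Let A be a commutative ring with unity, let M be an A-module, let N be an A-submodule of M such that N is finitely generated as an A-module, and let f : N → M be a surjective A-module homomorphism. Then f is an A-module isomorphism (i.e., f is bijective). -/
/-- Let `A` be a commutative ring, `M` an `A`-module, `N` an `A`-submodule of `M` that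
is finitely generated as an `A`-module, and `f : N → M` a surjective `A`-module
homomorphism. Then `f` is an `A`-module isomorphism (i.e., bijective). -/
theorem orzech_fg_submodule (A : Type*) [CommRing A] (M : Type*) [AddCommGroup M]
    [Module A M] (N : Submodule A M) (hN : N.FG) (f : N →ₗ[A] M)
    (hf : Function.Surjective f) : Function.Bijective f := by
  have hNfin : Module.Finite A N := Module.Finite.iff_fg.mpr hN
  have : Module.Finite A M := Module.Finite.of_surjective f hf
  exact ⟨OrzechProperty.injective_of_surjective_of_submodule f hf, hf⟩
end

section
/- Let A be a commutative ring with unity, let B be a finitely generated commutative A-algebra, and let f : B → B be a surjective A-algebra endomorphism of B. Then f is an A-algebra isomorphism (i.e., f is bijective). -/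
/-!
Choose a finite generating set `s` of `B` over `A`, a section `g` of `f`, and an element `x`
of the kernel. Only finitely many coefficients from `A` are needed to express `x`, the `f b`
and the `g b` (`b ∈ s`) as polynomials in `s`; together with `s` they generate a subring `R`
of `B` which is Noetherian by the Hilbert basis theorem. Since `f` fixes the coefficients,
`f` maps `R` onto itself, and a surjective endomorphism of a Noetherian ring is injective
because the kernels of its iterates stabilise. Hence `x = 0`.
-/

open Function

theorem RingHom.injective_of_surjective_of_isNoetherianRing {R : Type*} [Ring R]
    [IsNoetherianRing R] (g : R →+* R) (hg : Surjective g) : Injective g := by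
  have hmono : Monotone fun n => RingHom.ker (g ^ n) :=
    monotone_nat_of_le_succ fun n x hx => by
      rw [RingHom.mem_ker, RingHom.coe_pow] at hx ⊢
      rw [iterate_succ_apply', hx, map_zero]
  obtain ⟨n, hn⟩ := monotone_stabilizes_iff_noetherian.2 ‹_› ⟨_, hmono⟩
  refine (injective_iff_map_eq_zero g).2 fun x hx => ?_
  obtain ⟨y, rfl⟩ := (hg.iterate n) x
  have hy : y ∈ RingHom.ker (g ^ (n + 1)) := by
    simpa [RingHom.mem_ker, iterate_succ_apply'] using hx
  have hstable : RingHom.ker (g ^ n) = RingHom.ker (g ^ (n + 1)) := hn (n + 1) n.le_succ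
  rw [← hstable] at hy
  simpa [RingHom.mem_ker] using hy

theorem Subring.injOn_of_map_eq_self {B : Type*} [Ring B] (f : B →+* B) (R : Subring B)
    [IsNoetherianRing R] (hR : R.map f = R) : Set.InjOn f R := by
  let F : R →+* R := f.restrict R R fun y hy => hR ▸ Subring.mem_map.2 ⟨y, hy, rfl⟩
  have hF : Surjective F := by
    rintro ⟨y, hy⟩
    rw [← hR] at hy
    obtain ⟨z, hz, rfl⟩ := hy
    exact ⟨⟨z, hz⟩, rfl⟩
  intro y hy z hz hyz
  have hFyz : F ⟨y, hy⟩ = F ⟨z, hz⟩ := Subtype.ext hyz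
  exact congrArg Subtype.val (F.injective_of_surjective_of_isNoetherianRing hF hFyz)

theorem RingHom.injOn_subring_closure_of_finite {B : Type*} [CommRing B] (f : B →+* B)
    {G : Set B} (hG : G.Finite) (hmaps : Set.MapsTo f G (Subring.closure G))
    (hsurj : G ⊆ f '' Subring.closure G) : Set.InjOn f (Subring.closure G) := by
  have := is_noetherian_subring_closure G hG
  refine Subring.injOn_of_map_eq_self f _ (le_antisymm ?_ (Subring.closure_le.2 hsurj))
  exact Subring.map_le_iff_le_comap.2 (Subring.closure_le.2 hmaps)

theorem Algebra.exists_finset_subset_subring_closure {A B : Type*} [CommRing A] [CommRing B]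
    [Algebra A B] {s : Finset B} (hs : Algebra.adjoin A (s : Set B) = ⊤) (Y : Finset B) :
    ∃ T : Finset A, (Y : Set B) ⊆ Subring.closure (algebraMap A B '' T ∪ s) := by
  classical
  have hdir : Directed (· ≤ ·) fun T : Finset A => Subring.closure (algebraMap A B '' T ∪ s) :=
    Monotone.directed_le fun T T' h =>
      Subring.closure_mono (Set.union_subset_union_left _ (Set.image_mono h))
  have htop : ⨆ T : Finset A, Subring.closure (algebraMap A B '' T ∪ s) = ⊤ := by
    refine top_unique ?_
    rw [← Algebra.toSubring_eq_top.2 hs, Algebra.adjoin_eq_ring_closure, Subring.closure_le]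
    rintro _ (⟨a, rfl⟩ | hb)
    · exact (Subring.mem_iSup_of_directed hdir).2
        ⟨{a}, Subring.subset_closure (Or.inl ⟨a, by simp, rfl⟩)⟩
    · exact (Subring.mem_iSup_of_directed hdir).2 ⟨∅, Subring.subset_closure (Or.inr hb)⟩
  refine hdir.exists_mem_subset_of_finset_subset_biUnion ?_
  rw [← Subring.coe_iSup_of_directed hdir, htop]
  exact Set.subset_univ _

/-- **Orzech–Ribes.** A surjective `A`-algebra endomorphism of a finitely generated
commutative `A`-algebra `B` is an `A`-algebra isomorphism (i.e., bijective). -/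
theorem orzech_ribes (A : Type*) [CommRing A] (B : Type*) [CommRing B] [Algebra A B]
    (hB : Algebra.FiniteType A B) (f : B →ₐ[A] B) (hf : Function.Surjective f) :
    Function.Bijective f := by
  classical
  refine ⟨(injective_iff_map_eq_zero f).2 fun x hx => ?_, hf⟩
  obtain ⟨s, hs⟩ := hB.out
  choose g hg using hf
  obtain ⟨T, hT⟩ :=
    Algebra.exists_finset_subset_subring_closure hs (s.image f ∪ s.image g ∪ {x})
  set G : Set B := algebraMap A B '' T ∪ s
  have hmaps : Set.MapsTo f G (Subring.closure G) := by
    rintro _ (⟨a, ha, rfl⟩ | hb)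
    · rw [f.commutes]
      exact Subring.subset_closure (Or.inl ⟨a, ha, rfl⟩)
    · exact hT (Finset.mem_union_left _ (Finset.mem_union_left _ (s.mem_image_of_mem f hb)))
  have hsurj : G ⊆ f '' Subring.closure G := by
    rintro _ (⟨a, ha, rfl⟩ | hb)
    · exact ⟨_, Subring.subset_closure (Or.inl ⟨a, ha, rfl⟩), f.commutes a⟩
    · refine ⟨g _, hT ?_, hg _⟩
      exact Finset.mem_union_left _ (Finset.mem_union_right _ (s.mem_image_of_mem g hb))
  have hinj := (f : B →+* B).injOn_subring_closure_of_finite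
    ((T.finite_toSet.image _).union s.finite_toSet) hmaps hsurj
  exact hinj (hT (by simp)) (zero_mem _) (by simpa using hx)
end
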